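/- Let G = (S, T, E) be a finite bipartite graph with positive edge weights w, and let M be a random matching chosen with probability proportional to w(M) = ∏_{e ∈ M} w(e). Then for any subsets X and Y of V = S ∪ T, ℙ(X ⊆ B(M)) · ℙ(Y ⊆ B(M)) ≥ ℙ(X ∩ Y ⊆ B(M)) · ℙ(X ∪ Y ⊆ B(M)). Equivalently, (∑_{M ∈ ℳ, X ⊆ B(M)} w(M)) · (∑_{M ∈ ℳ, Y ⊆ B(M)} w(M)) ≥ (∑_{M ∈ ℳ, X ∩ Y ⊆ B(M)} w(M)) · (∑_{M ∈ ℳ, X ∪ Y ⊆ B(M)} w(M)). -/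
import Mathlib


open Finset

variable {α : Type*} [Fintype α] [DecidableEq α]

/-- A matching in a bipartite graph: edges are pairs `(s, t)` with `s ∈ S`, `t ∈ T`,
and the edges of a matching are required to be pairwise vertex-disjoint. -/
def IsMatching (M : Finset (α × α)) : Prop :=
  ∀ e ∈ M, ∀ f ∈ M, e ≠ f → e.1 ≠ f.1 ∧ e.2 ≠ f.2

instance : DecidablePred (IsMatching (α := α)) := fun M => by
  unfold IsMatching; infer_instance

/-- The set `ℳ` of all matchings whose edges lie in the edge set `E`. -/
def matchings (E : Finset (α × α)) : Finset (Finset (α × α)) :=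
  E.powerset.filter IsMatching

/-- `V(M)`: the set of vertices covered by the matching `M`. -/
def covered (M : Finset (α × α)) : Finset α :=
  M.image Prod.fst ∪ M.image Prod.snd

/-- `B(M) = V(M) Δ S`. -/
def bSet (S : Finset α) (M : Finset (α × α)) : Finset α :=
  symmDiff (covered M) S

section
set_option linter.unusedSectionVars false

namespace LogSubAux

variable {S : Finset α} {A B M N : Finset (α × α)} {R Q : Finset α} {v q u f w : α}

lemma mem_covered {M : Finset (α × α)} {v : α} :
    v ∈ covered M ↔ ∃ e ∈ M, e.1 = v ∨ e.2 = v := by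
  simp only [covered, mem_union, mem_image]
  constructor
  · rintro (⟨e, he, rfl⟩ | ⟨e, he, rfl⟩) <;> exact ⟨e, he, by simp⟩
  · rintro ⟨e, he, (rfl | rfl)⟩
    · exact Or.inl ⟨e, he, rfl⟩
    · exact Or.inr ⟨e, he, rfl⟩

lemma mem_bSet {S : Finset α} {M : Finset (α × α)} {v : α} :
    v ∈ bSet S M ↔ (v ∈ covered M ∧ v ∉ S) ∨ (v ∈ S ∧ v ∉ covered M) := by
  rw [bSet, Finset.mem_symmDiff]

lemma mem_matchings {E M : Finset (α × α)} :
    M ∈ matchings E ↔ M ⊆ E ∧ IsMatching M := by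
  simp [matchings, mem_filter, mem_powerset]

def Dset (A B : Finset (α × α)) : Finset (α × α) := (A ∪ B) \ (A ∩ B)

lemma mem_Dset {e : α × α} :
    e ∈ Dset A B ↔ (e ∈ A ∧ e ∉ B) ∨ (e ∈ B ∧ e ∉ A) := by
  simp only [Dset, mem_sdiff, mem_union, mem_inter]; tauto

lemma Dset_comm (A B : Finset (α × α)) : Dset A B = Dset B A := by
  ext e; simp only [mem_Dset]; tauto

def graphOf (A B : Finset (α × α)) : SimpleGraph α :=
  SimpleGraph.fromRel (fun a b => (a, b) ∈ Dset A B)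

lemma adj_graphOf {a b : α} :
    (graphOf A B).Adj a b ↔ a ≠ b ∧ ((a, b) ∈ Dset A B ∨ (b, a) ∈ Dset A B) :=
  SimpleGraph.fromRel_adj _ a b


/-! ### Parity / alternating path lemma -/

def phi (S : Finset α) (M N : Finset (α × α)) (v : α) : Prop :=
  (v ∈ S ∧ v ∈ covered M ∧ v ∉ covered N) ∨ (v ∉ S ∧ v ∈ covered N ∧ v ∉ covered M)

def Inv (S : Finset α) (M N : Finset (α × α)) (u f : α) : Prop :=
  (u ∉ S ∧ (f, u) ∈ M ∧ (f, u) ∉ N) ∨ (u ∈ S ∧ (u, f) ∈ N ∧ (u, f) ∉ M)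

lemma inv_step (hside : ∀ e ∈ M ∪ N, e.1 ∈ S ∧ e.2 ∉ S)
    (hMm : IsMatching M) (hNm : IsMatching N)
    (hI : Inv S M N u f) (hadj : (graphOf M N).Adj u w) (hwf : w ≠ f) :
    Inv S M N w u := by
  have hDsub : Dset M N ⊆ M ∪ N := fun e he => by
    rcases mem_Dset.mp he with ⟨h, _⟩ | ⟨h, _⟩
    · exact mem_union_left _ h
    · exact mem_union_right _ h
  rcases adj_graphOf.mp hadj with ⟨hne, h1 | h2⟩
  · -- (u, w) ∈ Dset, so u ∈ S
    have huS : u ∈ S := (hside _ (hDsub h1)).1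
    rcases hI with ⟨huS', _, _⟩ | ⟨_, hfN, hfM⟩
    · exact absurd huS huS'
    · rcases mem_Dset.mp h1 with ⟨hM, hnN⟩ | ⟨hN, hnM⟩
      · exact Or.inl ⟨(hside _ (hDsub h1)).2, hM, hnN⟩
      · exfalso
        have : (u, w) = (u, f) := by
          by_contra hne2
          exact (hNm _ hN _ hfN hne2).1 rfl
        exact hwf (congrArg Prod.snd this)
  · -- (w, u) ∈ Dset, so u ∉ S
    have huS : u ∉ S := (hside _ (hDsub h2)).2
    rcases hI with ⟨_, hfM, hfN⟩ | ⟨huS', _, _⟩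
    · rcases mem_Dset.mp h2 with ⟨hM, hnN⟩ | ⟨hN, hnM⟩
      · exfalso
        have : (w, u) = (f, u) := by
          by_contra hne2
          exact (hMm _ hM _ hfM hne2).2 rfl
        exact hwf (congrArg Prod.fst this)
      · exact Or.inr ⟨(hside _ (hDsub h2)).1, hN, hnM⟩
    · exact absurd huS' huS

lemma inv_not_phi (hI : Inv S M N v f) : ¬ phi S M N v := by
  rcases hI with ⟨hvS, hM, _⟩ | ⟨hvS, hN, _⟩
  · have : v ∈ covered M := mem_covered.mpr ⟨(f, v), hM, Or.inr rfl⟩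
    rintro (⟨h, _, _⟩ | ⟨_, _, h⟩)
    · exact hvS h
    · exact h this
  · have : v ∈ covered N := mem_covered.mpr ⟨(v, f), hN, Or.inl rfl⟩
    rintro (⟨_, _, h⟩ | ⟨h, _, _⟩)
    · exact h this
    · exact h hvS

lemma aux_walk : ∀ {u v f : α} (p : (graphOf M N).Walk u v),
    (∀ e ∈ M ∪ N, e.1 ∈ S ∧ e.2 ∉ S) → IsMatching M → IsMatching N →
    p.IsPath → f ∉ p.support → Inv S M N u f → ¬ phi S M N v := by
  intro u v f p
  induction p generalizing f with
  | nil => intro _ _ _ _ _ hI; exact inv_not_phi hI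
  | @cons u w v hadj p ih =>
    intro hside hMm hNm hp hf hI
    rw [SimpleGraph.Walk.cons_isPath_iff] at hp
    have hfs : f ∉ p.support := by
      intro h; exact hf (by rw [SimpleGraph.Walk.support_cons]; exact List.mem_cons_of_mem _ h)
    have hwf : w ≠ f := by
      intro h; exact hfs (h ▸ p.start_mem_support)
    exact ih hside hMm hNm hp.1 hp.2 (inv_step hside hMm hNm hI hadj hwf)

lemma phi_start (hside : ∀ e ∈ M ∪ N, e.1 ∈ S ∧ e.2 ∉ S)
    (hq : phi S M N q) (hadj : (graphOf M N).Adj q u) : Inv S M N u q := by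
  have hDsub : Dset M N ⊆ M ∪ N := fun e he => by
    rcases mem_Dset.mp he with ⟨h, _⟩ | ⟨h, _⟩
    · exact mem_union_left _ h
    · exact mem_union_right _ h
  rcases adj_graphOf.mp hadj with ⟨hne, h1 | h2⟩
  · -- (q, u) ∈ Dset
    rcases hq with ⟨hqS, hqM, hqN⟩ | ⟨hqS, _, _⟩
    · rcases mem_Dset.mp h1 with ⟨hM, hnN⟩ | ⟨hN, _⟩
      · exact Or.inl ⟨(hside _ (hDsub h1)).2, hM, hnN⟩
      · exact absurd (mem_covered.mpr ⟨(q, u), hN, Or.inl rfl⟩) hqN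
    · exact absurd (hside _ (hDsub h1)).1 hqS
  · -- (u, q) ∈ Dset
    rcases hq with ⟨hqS, _, _⟩ | ⟨hqS, hqN, hqM⟩
    · exact absurd hqS (hside _ (hDsub h2)).2
    · rcases mem_Dset.mp h2 with ⟨hM, _⟩ | ⟨hN, hnM⟩
      · exact absurd (mem_covered.mpr ⟨(u, q), hM, Or.inr rfl⟩) hqM
      · exact Or.inr ⟨(hside _ (hDsub h2)).1, hN, hnM⟩

lemma parity (hside : ∀ e ∈ M ∪ N, e.1 ∈ S ∧ e.2 ∉ S)
    (hMm : IsMatching M) (hNm : IsMatching N)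
    (hq : phi S M N q) (hv : phi S M N v)
    (hr : (graphOf M N).Reachable q v) : v = q := by
  obtain ⟨p0⟩ := hr
  obtain ⟨p, hp⟩ := p0.toPath
  cases p with
  | nil => rfl
  | cons hadj p' =>
    rw [SimpleGraph.Walk.cons_isPath_iff] at hp
    exact absurd hv
      (aux_walk p' hside hMm hNm hp.1 hp.2 (phi_start hside hq hadj))


/-! ### The swap operation -/

def swapA (A B : Finset (α × α)) (R : Finset α) : Finset (α × α) :=
  A.filter (fun e => e.1 ∉ R) ∪ B.filter (fun e => e.1 ∈ R)

lemma swap_subset {E : Finset (α × α)} (hA : A ⊆ E) (hB : B ⊆ E) : swapA A B R ⊆ E :=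
  union_subset ((filter_subset _ _).trans hA) ((filter_subset _ _).trans hB)

lemma swap_matching (hMm : IsMatching A) (hNm : IsMatching B)
    (hclosed : ∀ e ∈ Dset A B, (e.1 ∈ R ↔ e.2 ∈ R)) :
    IsMatching (swapA A B R) := by
  intro e he f hf hne
  rw [swapA, mem_union, mem_filter, mem_filter] at he hf
  have key : ∀ e f : α × α, e ∈ A → e.1 ∉ R → f ∈ B → f.1 ∈ R → e.2 ≠ f.2 := by
    intro e f heA h1R hfB hf1R h22
    by_cases hfA : f ∈ A
    · rcases eq_or_ne e f with rfl | hne2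
      · exact h1R hf1R
      · exact (hMm _ heA _ hfA hne2).2 h22
    · have hfD : f ∈ Dset A B := mem_Dset.mpr (Or.inr ⟨hfB, hfA⟩)
      have hf2R : f.2 ∈ R := (hclosed _ hfD).mp hf1R
      by_cases heB : e ∈ B
      · rcases eq_or_ne e f with rfl | hne2
        · exact h1R hf1R
        · exact (hNm _ heB _ hfB hne2).2 h22
      · have heD : e ∈ Dset A B := mem_Dset.mpr (Or.inl ⟨heA, heB⟩)
        exact h1R ((hclosed _ heD).mpr (h22 ▸ hf2R))
  rcases he with ⟨heA, h1R⟩ | ⟨heB, h1R⟩ <;> rcases hf with ⟨hfA, hf1R⟩ | ⟨hfB, hf1R⟩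
  · exact hMm _ heA _ hfA hne
  · exact ⟨fun h => h1R (h ▸ hf1R), key e f heA h1R hfB hf1R⟩
  · exact ⟨fun h => hf1R (h ▸ h1R), fun h => key f e hfA hf1R heB h1R h.symm⟩
  · exact hNm _ heB _ hfB hne

lemma covered_swap_of_mem (hclosed : ∀ e ∈ Dset A B, (e.1 ∈ R ↔ e.2 ∈ R)) (hv : v ∈ R) :
    v ∈ covered (swapA A B R) ↔ v ∈ covered B := by
  constructor
  · rw [mem_covered]
    rintro ⟨e, he, hev⟩
    rw [swapA, mem_union, mem_filter, mem_filter] at he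
    rcases he with ⟨heA, h1R⟩ | ⟨heB, _⟩
    · rcases hev with h1 | h2
      · exact absurd (h1 ▸ hv) h1R
      · by_cases heB : e ∈ B
        · exact mem_covered.mpr ⟨e, heB, Or.inr h2⟩
        · have heD : e ∈ Dset A B := mem_Dset.mpr (Or.inl ⟨heA, heB⟩)
          exact absurd ((hclosed e heD).mpr (h2 ▸ hv)) h1R
    · exact mem_covered.mpr ⟨e, heB, hev⟩
  · rw [mem_covered]
    rintro ⟨e, heB, hev⟩
    rcases hev with h1 | h2
    · refine mem_covered.mpr ⟨e, ?_, Or.inl h1⟩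
      rw [swapA, mem_union, mem_filter, mem_filter]
      exact Or.inr ⟨heB, h1 ▸ hv⟩
    · by_cases h1R : e.1 ∈ R
      · refine mem_covered.mpr ⟨e, ?_, Or.inr h2⟩
        rw [swapA, mem_union, mem_filter, mem_filter]
        exact Or.inr ⟨heB, h1R⟩
      · by_cases heA : e ∈ A
        · refine mem_covered.mpr ⟨e, ?_, Or.inr h2⟩
          rw [swapA, mem_union, mem_filter, mem_filter]
          exact Or.inl ⟨heA, h1R⟩
        · have heD : e ∈ Dset A B := mem_Dset.mpr (Or.inr ⟨heB, heA⟩)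
          exact absurd ((hclosed e heD).mpr (h2 ▸ hv)) h1R

lemma covered_swap_of_not_mem (hclosed : ∀ e ∈ Dset A B, (e.1 ∈ R ↔ e.2 ∈ R)) (hv : v ∉ R) :
    v ∈ covered (swapA A B R) ↔ v ∈ covered A := by
  constructor
  · rw [mem_covered]
    rintro ⟨e, he, hev⟩
    rw [swapA, mem_union, mem_filter, mem_filter] at he
    rcases he with ⟨heA, _⟩ | ⟨heB, h1R⟩
    · exact mem_covered.mpr ⟨e, heA, hev⟩
    · rcases hev with h1 | h2
      · exact absurd (h1 ▸ h1R) hv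
      · by_cases heA : e ∈ A
        · exact mem_covered.mpr ⟨e, heA, Or.inr h2⟩
        · have heD : e ∈ Dset A B := mem_Dset.mpr (Or.inr ⟨heB, heA⟩)
          exact absurd (h2 ▸ (hclosed e heD).mp h1R) hv
  · rw [mem_covered]
    rintro ⟨e, heA, hev⟩
    rcases hev with h1 | h2
    · refine mem_covered.mpr ⟨e, ?_, Or.inl h1⟩
      rw [swapA, mem_union, mem_filter, mem_filter]
      exact Or.inl ⟨heA, h1 ▸ hv⟩
    · by_cases h1R : e.1 ∈ R
      · by_cases heB : e ∈ B
        · refine mem_covered.mpr ⟨e, ?_, Or.inr h2⟩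
          rw [swapA, mem_union, mem_filter, mem_filter]
          exact Or.inr ⟨heB, h1R⟩
        · have heD : e ∈ Dset A B := mem_Dset.mpr (Or.inl ⟨heA, heB⟩)
          exact absurd (h2 ▸ (hclosed e heD).mp h1R) hv
      · refine mem_covered.mpr ⟨e, ?_, Or.inr h2⟩
        rw [swapA, mem_union, mem_filter, mem_filter]
        exact Or.inl ⟨heA, h1R⟩

lemma bSet_swap_of_mem (hclosed : ∀ e ∈ Dset A B, (e.1 ∈ R ↔ e.2 ∈ R)) (hv : v ∈ R) :
    v ∈ bSet S (swapA A B R) ↔ v ∈ bSet S B := by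
  simp only [mem_bSet, covered_swap_of_mem hclosed hv]

lemma bSet_swap_of_not_mem (hclosed : ∀ e ∈ Dset A B, (e.1 ∈ R ↔ e.2 ∈ R)) (hv : v ∉ R) :
    v ∈ bSet S (swapA A B R) ↔ v ∈ bSet S A := by
  simp only [mem_bSet, covered_swap_of_not_mem hclosed hv]

lemma swap_swap : swapA (swapA A B R) (swapA B A R) R = A := by
  ext e; simp only [swapA, mem_union, mem_filter]; tauto

lemma Dset_swap : Dset (swapA A B R) (swapA B A R) = Dset A B := by
  ext e
  simp only [mem_Dset, swapA, mem_union, mem_filter]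
  by_cases h : e.1 ∈ R <;> simp [h] <;> tauto

lemma prod_swap (w : α × α → ℝ) :
    (∏ e ∈ swapA A B R, w e) * (∏ e ∈ swapA B A R, w e)
      = (∏ e ∈ A, w e) * (∏ e ∈ B, w e) := by
  have d1 : Disjoint (A.filter (fun e => e.1 ∉ R)) (B.filter (fun e => e.1 ∈ R)) :=
    disjoint_left.mpr fun e h1 h2 => (mem_filter.mp h1).2 (mem_filter.mp h2).2
  have d2 : Disjoint (B.filter (fun e => e.1 ∉ R)) (A.filter (fun e => e.1 ∈ R)) :=
    disjoint_left.mpr fun e h1 h2 => (mem_filter.mp h1).2 (mem_filter.mp h2).2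
  have split : ∀ C : Finset (α × α), (∏ e ∈ C, w e)
      = (∏ e ∈ C.filter (fun e => e.1 ∉ R), w e) * (∏ e ∈ C.filter (fun e => e.1 ∈ R), w e) := by
    intro C
    rw [mul_comm, Finset.prod_filter_mul_prod_filter_not C (fun e => e.1 ∈ R) w]
  rw [swapA, swapA, Finset.prod_union d1, Finset.prod_union d2, split A, split B]
  ring


/-! ### Reachable sets -/

open Classical in
noncomputable def Rgen (Q : Finset α) (A B : Finset (α × α)) : Finset α :=
  Finset.univ.filter (fun v => ∃ q ∈ Q, (graphOf A B).Reachable q v)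

lemma mem_Rgen : v ∈ Rgen Q A B ↔ ∃ q ∈ Q, (graphOf A B).Reachable q v := by
  simp [Rgen]

lemma self_mem_Rgen (hq : q ∈ Q) : q ∈ Rgen Q A B :=
  mem_Rgen.mpr ⟨q, hq, SimpleGraph.Reachable.refl q⟩

lemma Rgen_adj_closed (hv : v ∈ Rgen Q A B) (hadj : (graphOf A B).Adj v w) :
    w ∈ Rgen Q A B := by
  obtain ⟨q, hq, hr⟩ := mem_Rgen.mp hv
  exact mem_Rgen.mpr ⟨q, hq, hr.trans hadj.reachable⟩

lemma Rgen_closed (hside : ∀ e ∈ Dset A B, e.1 ∈ S ∧ e.2 ∉ S) :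
    ∀ e ∈ Dset A B, (e.1 ∈ Rgen Q A B ↔ e.2 ∈ Rgen Q A B) := by
  intro e he
  have hne : e.1 ≠ e.2 := fun h => (hside e he).2 (h ▸ (hside e he).1)
  have hD : (e.1, e.2) ∈ Dset A B := by simpa using he
  have hadj : (graphOf A B).Adj e.1 e.2 := adj_graphOf.mpr ⟨hne, Or.inl hD⟩
  exact ⟨fun h => Rgen_adj_closed h hadj, fun h => Rgen_adj_closed h hadj.symm⟩

lemma Rgen_congr {A' B' : Finset (α × α)} (h : Dset A B = Dset A' B') :
    Rgen Q A B = Rgen Q A' B' := by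
  unfold Rgen graphOf
  rw [h]


lemma Dset_subset : Dset A B ⊆ A ∪ B := sdiff_subset

lemma phi_of_bSet (hv : v ∈ bSet S N) (hv' : v ∉ bSet S M) : phi S M N v := by
  rw [mem_bSet] at hv hv'
  unfold phi
  tauto

lemma forward {E : Finset (α × α)} (hside : ∀ e ∈ E, e.1 ∈ S ∧ e.2 ∉ S)
    {X Y : Finset α} (hME : M ⊆ E) (hNE : N ⊆ E)
    (hMm : IsMatching M) (hNm : IsMatching N)
    (hMXY : X ∩ Y ⊆ bSet S M) (hNXY : X ∪ Y ⊆ bSet S N) :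
    swapA M N (Rgen (X \ bSet S M) M N) ∈ matchings E ∧
    swapA N M (Rgen (X \ bSet S M) M N) ∈ matchings E ∧
    X ⊆ bSet S (swapA M N (Rgen (X \ bSet S M) M N)) ∧
    Y ⊆ bSet S (swapA N M (Rgen (X \ bSet S M) M N)) ∧
    X \ bSet S (swapA N M (Rgen (X \ bSet S M) M N)) = X \ bSet S M := by
  set R := Rgen (X \ bSet S M) M N with hR
  have hsideMN : ∀ e ∈ M ∪ N, e.1 ∈ S ∧ e.2 ∉ S :=
    fun e he => hside e ((union_subset hME hNE) he)
  have hsideD : ∀ e ∈ Dset M N, e.1 ∈ S ∧ e.2 ∉ S := fun e he => hsideMN e (Dset_subset he)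
  have hclosed : ∀ e ∈ Dset M N, (e.1 ∈ R ↔ e.2 ∈ R) := Rgen_closed hsideD
  have hclosed2 : ∀ e ∈ Dset N M, (e.1 ∈ R ↔ e.2 ∈ R) := by
    rw [Dset_comm N M]; exact hclosed
  refine ⟨mem_matchings.mpr ⟨swap_subset hME hNE, swap_matching hMm hNm hclosed⟩,
    mem_matchings.mpr ⟨swap_subset hNE hME, swap_matching hNm hMm hclosed2⟩, ?_, ?_, ?_⟩
  · -- X ⊆ bSet S M'
    intro x hx
    by_cases hxR : x ∈ R
    · rw [bSet_swap_of_mem hclosed hxR]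
      exact hNXY (mem_union_left _ hx)
    · rw [bSet_swap_of_not_mem hclosed hxR]
      by_contra hxb
      exact hxR (self_mem_Rgen (mem_sdiff.mpr ⟨hx, hxb⟩))
  · -- Y ⊆ bSet S N'
    intro y hy
    have hyN : y ∈ bSet S N := hNXY (mem_union_right _ hy)
    by_cases hyR : y ∈ R
    · rw [bSet_swap_of_mem hclosed2 hyR]
      by_contra hyM
      have hphiy : phi S M N y := phi_of_bSet hyN hyM
      obtain ⟨q, hqQ, hreach⟩ := mem_Rgen.mp hyR
      obtain ⟨hqX, hqM⟩ := mem_sdiff.mp hqQ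
      have hphiq : phi S M N q := phi_of_bSet (hNXY (mem_union_left _ hqX)) hqM
      have hyq : y = q := parity hsideMN hMm hNm hphiq hphiy hreach
      subst hyq
      exact hqM (hMXY (mem_inter.mpr ⟨hqX, hy⟩))
    · rw [bSet_swap_of_not_mem hclosed2 hyR]
      exact hyN
  · -- marker set is preserved
    ext x
    simp only [mem_sdiff]
    constructor
    · rintro ⟨hx, hxb⟩
      by_cases hxR : x ∈ R
      · exact ⟨hx, fun h => hxb ((bSet_swap_of_mem hclosed2 hxR).mpr h)⟩
      · exact absurd ((bSet_swap_of_not_mem hclosed2 hxR).mpr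
          (hNXY (mem_union_left _ hx))) hxb
    · rintro ⟨hx, hxM⟩
      have hxR : x ∈ R := self_mem_Rgen (mem_sdiff.mpr ⟨hx, hxM⟩)
      exact ⟨hx, fun hxb => hxM ((bSet_swap_of_mem hclosed2 hxR).mp hxb)⟩

end LogSubAux

end

open LogSubAux

/-- **Corollary 2.** For a weighted random matching `M`, the function
`X ↦ ℙ(X ⊆ B(M))` is log-submodular:
`ℙ(X ⊆ B(M)) ⬝ ℙ(Y ⊆ B(M)) ≥ ℙ(X ∩ Y ⊆ B(M)) ⬝ ℙ(X ∪ Y ⊆ B(M))`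
(equivalent weighted-sum form). -/
theorem log_submodularity_weighted_random_matching
    (S T : Finset α) (hST : Disjoint S T) (hV : S ∪ T = Finset.univ)
    (E : Finset (α × α)) (hE : ∀ e ∈ E, e.1 ∈ S ∧ e.2 ∈ T)
    (w : α × α → ℝ) (hw : ∀ e ∈ E, 0 < w e)
    (X Y : Finset α) :
    (∑ M ∈ (matchings E).filter (fun M => X ⊆ bSet S M), ∏ e ∈ M, w e)
      * (∑ M ∈ (matchings E).filter (fun M => Y ⊆ bSet S M), ∏ e ∈ M, w e)
    ≥ (∑ M ∈ (matchings E).filter (fun M => X ∩ Y ⊆ bSet S M), ∏ e ∈ M, w e)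
      * (∑ M ∈ (matchings E).filter (fun M => X ∪ Y ⊆ bSet S M), ∏ e ∈ M, w e) := by
  classical
  have hside : ∀ e ∈ E, e.1 ∈ S ∧ e.2 ∉ S :=
    fun e he => ⟨(hE e he).1, Finset.disjoint_right.mp hST (hE e he).2⟩
  set sA := (matchings E).filter (fun M => X ⊆ bSet S M) with hsA
  set sB := (matchings E).filter (fun M => Y ⊆ bSet S M) with hsB
  set sC := (matchings E).filter (fun M => X ∩ Y ⊆ bSet S M) with hsC
  set sD := (matchings E).filter (fun M => X ∪ Y ⊆ bSet S M) with hsD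
  set f : Finset (α × α) × Finset (α × α) → ℝ :=
    fun p => (∏ e ∈ p.1, w e) * ∏ e ∈ p.2, w e with hf
  set Φ : Finset (α × α) × Finset (α × α) → Finset (α × α) × Finset (α × α) :=
    fun p => (swapA p.1 p.2 (Rgen (X \ bSet S p.1) p.1 p.2),
              swapA p.2 p.1 (Rgen (X \ bSet S p.1) p.1 p.2)) with hΦ
  have main : ∀ p ∈ sC ×ˢ sD, (Φ p).1 ∈ sA ∧ (Φ p).2 ∈ sB ∧
      (swapA (Φ p).1 (Φ p).2 (Rgen (X \ bSet S (Φ p).2) (Φ p).1 (Φ p).2),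
       swapA (Φ p).2 (Φ p).1 (Rgen (X \ bSet S (Φ p).2) (Φ p).1 (Φ p).2)) = p ∧
      f (Φ p) = f p := by
    rintro ⟨M, N⟩ hp
    rw [Finset.mem_product] at hp
    obtain ⟨hMmem, hNmem⟩ := hp
    rw [hsC, mem_filter] at hMmem
    rw [hsD, mem_filter] at hNmem
    obtain ⟨hM1, hMXY⟩ := hMmem
    obtain ⟨hN1, hNXY⟩ := hNmem
    obtain ⟨hME, hMm⟩ := mem_matchings.mp hM1
    obtain ⟨hNE, hNm⟩ := mem_matchings.mp hN1
    obtain ⟨hM'm, hN'm, hX', hY', hQeq⟩ := forward hside hME hNE hMm hNm hMXY hNXY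
    set R := Rgen (X \ bSet S M) M N with hR
    have hΦp : Φ (M, N) = (swapA M N R, swapA N M R) := rfl
    refine ⟨?_, ?_, ?_, ?_⟩
    · rw [hΦp]; rw [hsA, mem_filter]; exact ⟨hM'm, hX'⟩
    · rw [hΦp]; rw [hsB, mem_filter]; exact ⟨hN'm, hY'⟩
    · rw [hΦp]
      have hReq : Rgen (X \ bSet S (swapA N M R)) (swapA M N R) (swapA N M R) = R := by
        rw [hQeq, hR]
        exact Rgen_congr Dset_swap
      simp only [hReq]
      rw [swap_swap, swap_swap]
    · rw [hΦp, hf]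
      exact prod_swap w
  have hinj : ∀ p ∈ sC ×ˢ sD, ∀ q ∈ sC ×ˢ sD, Φ p = Φ q → p = q := by
    intro p hp q hq h
    have h1 := (main p hp).2.2.1
    have h2 := (main q hq).2.2.1
    rw [← h1, ← h2, h]
  have hsub : (sC ×ˢ sD).image Φ ⊆ sA ×ˢ sB := by
    intro r hr
    obtain ⟨p, hp, rfl⟩ := Finset.mem_image.mp hr
    exact Finset.mem_product.mpr ⟨(main p hp).1, (main p hp).2.1⟩
  have hnonneg : ∀ p ∈ sA ×ˢ sB, 0 ≤ f p := by
    rintro ⟨M, N⟩ hp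
    rw [Finset.mem_product, hsA, hsB, mem_filter, mem_filter] at hp
    obtain ⟨⟨hM1, _⟩, ⟨hN1, _⟩⟩ := hp
    have hME := (mem_matchings.mp hM1).1
    have hNE := (mem_matchings.mp hN1).1
    exact mul_nonneg
      (Finset.prod_nonneg fun e he => (hw e (hME he)).le)
      (Finset.prod_nonneg fun e he => (hw e (hNE he)).le)
  have key : ∑ p ∈ sC ×ˢ sD, f p ≤ ∑ p ∈ sA ×ˢ sB, f p := by
    have e1 : ∑ p ∈ (sC ×ˢ sD).image Φ, f p = ∑ p ∈ sC ×ˢ sD, f (Φ p) :=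
      Finset.sum_image hinj
    have e2 : ∑ p ∈ sC ×ˢ sD, f (Φ p) = ∑ p ∈ sC ×ˢ sD, f p :=
      Finset.sum_congr rfl fun p hp => (main p hp).2.2.2
    calc ∑ p ∈ sC ×ˢ sD, f p = ∑ p ∈ (sC ×ˢ sD).image Φ, f p := by rw [e1, e2]
      _ ≤ ∑ p ∈ sA ×ˢ sB, f p := Finset.sum_le_sum_of_subset_of_nonneg hsub
          (fun p hp _ => hnonneg p hp)
  rw [ge_iff_le, Finset.sum_mul_sum, Finset.sum_mul_sum]
  rw [← Finset.sum_product' (s := sC) (t := sD) (f := fun M N => (∏ e ∈ M, w e) * ∏ e ∈ N, w e)]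
  rw [← Finset.sum_product' (s := sA) (t := sB) (f := fun M N => (∏ e ∈ M, w e) * ∏ e ∈ N, w e)]
  exact key
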